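/- For 2 < p < ∞ and n ≥ 2, the unit vector e₁ in ℓ_p^n does not admit an outer ellipsoid: there is no inner-product norm |·| on ℝⁿ with |z| ≤ ‖z‖_p for all z and |e₁| = 1. -/

import Mathlib

/-!
Evaluating the form on `e₁ ± t e₂` and adding (the parallelogram identity, valid for any bilinear
form) gives `1 + t² B(e₂, e₂) ≤ (1 + tᵖ)^(2/p) ≤ 1 + tᵖ`. As `B(e₂, e₂) > 0` and `p > 2`, this
fails for small `t > 0`.
-/
open scoped ENNReal

theorem PiLp.smul_single {ι α : Type*} [DecidableEq ι] {β : ι → Type*} [Monoid α]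
    [∀ i, AddMonoid (β i)] [∀ i, DistribMulAction α (β i)] (p : ℝ≥0∞) (c : α) (i : ι)
    (a : β i) : c • single p i a = single p i (c • a) := by
  rw [← toLp_single, ← toLp_single, ← WithLp.toLp_smul, Pi.single_smul]

theorem PiLp.norm_single_add_single {ι : Type*} [Fintype ι] [DecidableEq ι]
    {β : ι → Type*} [∀ i, SeminormedAddCommGroup (β i)] {p : ℝ≥0∞} [Fact (1 ≤ p)]
    (hp : 0 < p.toReal) {i j : ι} (hij : i ≠ j) (a : β i) (b : β j) :
    ‖single p i a + single p j b‖ = (‖a‖ ^ p.toReal + ‖b‖ ^ p.toReal) ^ (1 / p.toReal) := by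
  rw [norm_eq_sum hp, Fintype.sum_eq_add i j hij]
  · simp [Pi.single_eq_of_ne hij.symm, Pi.single_eq_of_ne hij]
  · rintro k ⟨hki, hkj⟩
    simp [Pi.single_eq_of_ne hki, Pi.single_eq_of_ne hkj, Real.zero_rpow hp.ne']

theorem PiLp.sq_norm_single_one_add_smul_single_le {ι : Type*} [Fintype ι] [DecidableEq ι]
    {p : ℝ≥0∞} [Fact (1 ≤ p)] (hp : 2 ≤ p.toReal) {i j : ι} (hij : i ≠ j) (s : ℝ) :
    ‖(single p i 1 + s • single p j 1 : PiLp p fun _ : ι => ℝ)‖ ^ 2 ≤ 1 + |s| ^ p.toReal := by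
  have hp0 : 0 < p.toReal := by linarith
  have hbase : 1 ≤ 1 + |s| ^ p.toReal := le_add_of_nonneg_right (by positivity)
  rw [smul_single, smul_eq_mul, mul_one, norm_single_add_single (β := fun _ => ℝ) hp0 hij,
    norm_one, Real.one_rpow, Real.norm_eq_abs, ← Real.rpow_natCast,
    ← Real.rpow_mul (by positivity)]
  calc (1 + |s| ^ p.toReal) ^ (1 / p.toReal * ((2 : ℕ) : ℝ))
      ≤ (1 + |s| ^ p.toReal) ^ (1 : ℝ) := by
        refine Real.rpow_le_rpow_of_exponent_le hbase ?_
        rw [Nat.cast_ofNat, one_div_mul_eq_div, div_le_one hp0]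
        exact hp
    _ = 1 + |s| ^ p.toReal := Real.rpow_one _

theorem LinearMap.BilinForm.apply_add_add_apply_sub {R M : Type*} [CommRing R] [AddCommGroup M]
    [Module R M] (B : LinearMap.BilinForm R M) (x y : M) :
    B (x + y) (x + y) + B (x - y) (x - y) = 2 * (B x x + B y y) := by
  simp only [map_add, map_sub, LinearMap.add_apply, LinearMap.sub_apply]
  ring

theorem exists_rpow_lt_mul_sq {c q : ℝ} (hc : 0 < c) (hq : 2 < q) :
    ∃ t : ℝ, 0 < t ∧ t ^ q < c * t ^ 2 := by
  set t := (c / 2) ^ (q - 2)⁻¹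
  have ht : 0 < t := by positivity
  have hpow : t ^ (q - 2) = c / 2 := by
    rw [← Real.rpow_mul (by positivity), inv_mul_cancel₀ (by linarith), Real.rpow_one]
  refine ⟨t, ht, ?_⟩
  calc t ^ q = t ^ (q - 2) * t ^ 2 := by
        rw [← Real.rpow_natCast, ← Real.rpow_add ht]; norm_num
    _ < c * t ^ 2 := by rw [hpow]; gcongr; linarith

/-- For `2 < p < ∞` and `n ≥ 2`, the unit vector `e₁` of `ℓ_p^n` admits no outer ellipsoid:
there is no inner-product norm (symmetric positive-definite bilinear form `B`) with
`√(B z z) ≤ ‖z‖_p` for all `z` and `B e₁ e₁ = 1`. -/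
theorem stmt9 (n : ℕ) (hn : 2 ≤ n) (p : ℝ≥0∞) [Fact (1 ≤ p)] (hp : 2 < p) (hp' : p ≠ ⊤) :
    ¬ ∃ B : LinearMap.BilinForm ℝ (PiLp p (fun _ : Fin n => ℝ)),
        (∀ z w, B z w = B w z) ∧
        (∀ z : PiLp p (fun _ : Fin n => ℝ), z ≠ 0 → 0 < B z z) ∧
        (∀ z : PiLp p (fun _ : Fin n => ℝ), B z z ≤ ‖z‖ ^ 2) ∧
        B ((WithLp.equiv p (Fin n → ℝ)).symm (Pi.single (⟨0, by omega⟩ : Fin n) 1))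
          ((WithLp.equiv p (Fin n → ℝ)).symm (Pi.single (⟨0, by omega⟩ : Fin n) 1)) = 1 := by
  rintro ⟨B, -, hpos, hle, he₁⟩
  have hq : 2 < p.toReal := by simpa using ENNReal.toReal_strict_mono hp' hp
  set i : Fin n := ⟨0, by omega⟩
  set j : Fin n := ⟨1, by omega⟩
  have hij : i ≠ j := by simp [i, j, Fin.ext_iff]
  set e₁ : PiLp p (fun _ : Fin n => ℝ) := PiLp.single p i 1
  set e₂ : PiLp p (fun _ : Fin n => ℝ) := PiLp.single p j 1
  change B e₁ e₁ = 1 at he₁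
  obtain ⟨t, ht, hlt⟩ :=
    exists_rpow_lt_mul_sq (hpos e₂ ((PiLp.single_eq_zero_iff _ _).not.mpr one_ne_zero)) hq
  have key : 2 * (1 + t ^ 2 * B e₂ e₂) ≤ 2 * (1 + t ^ p.toReal) :=
    calc 2 * (1 + t ^ 2 * B e₂ e₂) = 2 * (B e₁ e₁ + B (t • e₂) (t • e₂)) := by
          simp only [he₁, map_smul, LinearMap.smul_apply, smul_eq_mul]; ring
      _ = B (e₁ + t • e₂) (e₁ + t • e₂) + B (e₁ - t • e₂) (e₁ - t • e₂) :=
          (B.apply_add_add_apply_sub _ _).symm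
      _ ≤ ‖e₁ + t • e₂‖ ^ 2 + ‖e₁ + (-t) • e₂‖ ^ 2 := by
          rw [neg_smul, ← sub_eq_add_neg]; exact add_le_add (hle _) (hle _)
      _ ≤ (1 + |t| ^ p.toReal) + (1 + |-t| ^ p.toReal) :=
          add_le_add (PiLp.sq_norm_single_one_add_smul_single_le hq.le hij t)
            (PiLp.sq_norm_single_one_add_smul_single_le hq.le hij (-t))
      _ = 2 * (1 + t ^ p.toReal) := by rw [abs_neg, abs_of_pos ht]; ring
  linarith
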